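/- arXiv:2111.11586 — 2 statements merged into one kernel-verified Lean document; each statement's English description precedes it below -/
import Mathlib

section
/- If Δ is generated by a finite set S and N is the normal closure in Δ of a finite set F, then the fiber product Δ ×_N Δ is generated by the finite set {(s,s) : s ∈ S} ∪ {(1,w) : w ∈ F}. -/
/-! The subgroup `K` generated by the `(s, s)` and `(1, w)` contains the diagonal, because `S`
generates `Δ`. Conjugating by `(δ, δ)` then shows that `{n | (n, 1) ∈ K}` is normal; it contains
`F` because `(w, 1) = (w, w)(1, w)⁻¹`, hence all of `N`. Finally `(δn, δ) = (δ, δ)(n, 1)`. -/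

/-- The fiber product `Δ ×_N Δ = {(δn, δ) : δ ∈ Δ, n ∈ N}` as a subgroup of `Δ × Δ`. -/
def fiberProduct (Δ : Type*) [Group Δ] (N : Subgroup Δ) [hN : N.Normal] :
    Subgroup (Δ × Δ) where
  carrier := {p : Δ × Δ | ∃ δ n, n ∈ N ∧ p = (δ * n, δ)}
  one_mem' := ⟨1, 1, N.one_mem, by simp; rfl⟩
  mul_mem' := by
    rintro _ _ ⟨δ, n, hn, rfl⟩ ⟨δ', n', hn', rfl⟩
    refine ⟨δ * δ', (δ'⁻¹ * n * δ') * n',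
      N.mul_mem (by simpa using hN.conj_mem n hn δ'⁻¹) hn', ?_⟩
    have h1 : (δ * n) * (δ' * n') = (δ * δ') * ((δ'⁻¹ * n * δ') * n') := by group
    simp [Prod.ext_iff, h1]
  inv_mem' := by
    rintro _ ⟨δ, n, hn, rfl⟩
    refine ⟨δ⁻¹, δ * n⁻¹ * δ⁻¹, by simpa using hN.conj_mem n⁻¹ (N.inv_mem hn) δ, ?_⟩
    have h1 : (δ * n)⁻¹ = δ⁻¹ * (δ * n⁻¹ * δ⁻¹) := by group
    simp [Prod.ext_iff, h1]

open Subgroup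

section

variable {G : Type*} [Group G]

theorem Subgroup.diag_mem_of_closure_eq_top {S : Set G} (hS : closure S = ⊤)
    {K : Subgroup (G × G)} (hSK : ∀ s ∈ S, (s, s) ∈ K) (g : G) : (g, g) ∈ K := by
  have hle : closure S ≤ K.comap ((MonoidHom.id G).prod (MonoidHom.id G)) :=
    (closure_le _).mpr hSK
  rw [hS] at hle
  exact hle (mem_top g)

theorem Subgroup.normal_comap_inl_of_diag_mem {K : Subgroup (G × G)}
    (hdiag : ∀ g : G, (g, g) ∈ K) : (K.comap (MonoidHom.inl G G)).Normal :=
  ⟨fun n hn g => by simpa using K.mul_mem (K.mul_mem (hdiag g) hn) (K.inv_mem (hdiag g))⟩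

theorem mem_fiberProduct_iff {N : Subgroup G} [N.Normal] {p : G × G} :
    p ∈ fiberProduct G N ↔ p.2⁻¹ * p.1 ∈ N := by
  constructor
  · rintro ⟨δ, n, hn, rfl⟩
    simpa using hn
  · exact fun h => ⟨p.2, p.2⁻¹ * p.1, h, by simp⟩

theorem fiberProduct_le_of_diag_mem {N : Subgroup G} [N.Normal] {K : Subgroup (G × G)}
    (hdiag : ∀ g : G, (g, g) ∈ K) (hN : N ≤ K.comap (MonoidHom.inl G G)) :
    fiberProduct G N ≤ K := by
  rintro _ ⟨δ, n, hn, rfl⟩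
  simpa using K.mul_mem (hdiag δ) (hN hn)

end

theorem fiberProduct_finitely_generated_general {Δ : Type*} [Group Δ]
    (S F : Set Δ)
    (hSgen : Subgroup.closure S = ⊤) :
    Subgroup.closure ((fun s => (s, s)) '' S ∪ (fun w => ((1 : Δ), w)) '' F)
      = fiberProduct Δ (Subgroup.normalClosure F) := by
  set K := closure ((fun s => (s, s)) '' S ∪ (fun w => ((1 : Δ), w)) '' F)
  have hdiag : ∀ δ : Δ, (δ, δ) ∈ K :=
    diag_mem_of_closure_eq_top hSgen fun s hs => subset_closure (Or.inl ⟨s, hs, rfl⟩)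
  have := normal_comap_inl_of_diag_mem hdiag
  have hF : F ⊆ K.comap (MonoidHom.inl Δ Δ) := fun w hw => by
    simpa using K.mul_mem (hdiag w) (K.inv_mem (subset_closure (Or.inr ⟨w, hw, rfl⟩)))
  refine le_antisymm ?_ (fiberProduct_le_of_diag_mem hdiag (normalClosure_le_normal hF))
  rw [closure_le]
  rintro _ (⟨s, -, rfl⟩ | ⟨w, hw, rfl⟩) <;> rw [SetLike.mem_coe, mem_fiberProduct_iff]
  · simp
  · simpa using subset_normalClosure hw

/-- If `Δ` is generated by a finite set `S` and `N` is the normal closure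
of a finite set `F`, then `Δ ×_N Δ` is generated by `{(s,s) : s ∈ S} ∪ {(1,w) : w ∈ F}`. -/
theorem fiberProduct_finitely_generated {Δ : Type*} [Group Δ]
    (S F : Set Δ) (hSfin : S.Finite) (hFfin : F.Finite)
    (hSgen : Subgroup.closure S = ⊤) :
    Subgroup.closure ((fun s => (s, s)) '' S ∪ (fun w => ((1 : Δ), w)) '' F)
      = fiberProduct Δ (Subgroup.normalClosure F) :=
  fiberProduct_finitely_generated_general S F hSgen
end

section
/- Let Λ be a group, L ≤ Λ a subgroup, and N ⊴ L a normal subgroup of L such that the triple (Λ, L, N) has the Cohen–Lyndon property. Then there is a surjective group homomorphism from ⟨⟨N⟩⟩/[⟨⟨N⟩⟩, Λ] onto N/[L, N]. -/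
/-!
By the Cohen–Lyndon property `⟨⟨N⟩⟩` is the free product of the conjugates `tNt⁻¹`, `t ∈ T`,
so `tnt⁻¹ ↦ n` defines a homomorphism `ψ : ⟨⟨N⟩⟩ → N/[L, N]`, onto since `T` is nonempty.
Writing `gt = t'ul` with `t' ∈ T`, `u ∈ ⟨⟨N⟩⟩`, `l ∈ L`, the conjugate `g(tnt⁻¹)g⁻¹` is a
`⟨⟨N⟩⟩`-conjugate of `t'(lnl⁻¹)t'⁻¹`; as `N/[L, N]` is abelian and `L` acts trivially on it,
`ψ` is invariant under conjugation by `Λ`, hence kills `[⟨⟨N⟩⟩, Λ]`.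
-/

/-- The triple `(Λ, L, N)` (with `N ⊴ L ≤ Λ`) has the Cohen–Lyndon property: there is a
set `T` of left coset representatives of `⟨⟨N⟩⟩L` in `Λ` such that `⟨⟨N⟩⟩` is the
internal free product of the conjugates `tNt⁻¹`, `t ∈ T`, i.e. the conjugates generate
`⟨⟨N⟩⟩` and the natural map from their abstract free product is injective. -/
def CohenLyndon {Λ : Type*} [Group Λ] (L N : Subgroup Λ) : Prop :=
  ∃ T : Set Λ,
    (∀ g : Λ, ∃! t, t ∈ T ∧ t⁻¹ * g ∈ (Subgroup.normalClosure (N : Set Λ) ⊔ L)) ∧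
    (⨆ t : T, N.map (MulAut.conj t.1).toMonoidHom) = Subgroup.normalClosure (N : Set Λ) ∧
    Function.Injective
      (Monoid.CoprodI.lift fun t : T => (N.map (MulAut.conj t.1).toMonoidHom).subtype)

open Function Subgroup Monoid
open scoped Pointwise

abbrev Subgroup.Coinvariants {G : Type*} [Group G] (H : Subgroup G) [H.Normal] : Type _ :=
  H ⧸ (⁅(⊤ : Subgroup G), H⁆.subgroupOf H)

namespace Subgroup.Coinvariants

variable {G : Type*} [Group G] {H : Subgroup G} [H.Normal]

def mk : H →* H.Coinvariants := QuotientGroup.mk' _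

theorem mk_surjective : Surjective (mk : H →* H.Coinvariants) := QuotientGroup.mk'_surjective _

theorem mk_conjNormal (g : G) (h : H) : mk (MulAut.conjNormal g h) = mk h := by
  rw [mk, QuotientGroup.mk'_apply, QuotientGroup.mk'_apply, QuotientGroup.eq, mem_subgroupOf]
  convert commutator_mem_commutator (mem_top g) (inv_mem h.2) using 1
  simp only [commutatorElement_def, coe_mul, coe_inv, MulAut.conjNormal_apply]
  group

theorem mul_comm (a b : H.Coinvariants) : a * b = b * a := by
  obtain ⟨x, rfl⟩ := mk_surjective a
  obtain ⟨y, rfl⟩ := mk_surjective b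
  nth_rw 1 [← mk_conjNormal (y : G) x]
  rw [← map_mul, ← map_mul]
  congr 1
  ext
  simp

end Subgroup.Coinvariants

section

variable {Λ : Type*} [Group Λ]

noncomputable def Monoid.CoprodI.mulEquivISupOfInjective {ι : Type*} (M : ι → Subgroup Λ)
    (h : Injective (CoprodI.lift fun i => (M i).subtype)) :
    CoprodI (fun i => M i) ≃* ↥(⨆ i, M i) :=
  (MonoidHom.ofInjective h).trans
    (MulEquiv.subgroupCongr (by simp only [CoprodI.range_eq_iSup, range_subtype]))

@[simp]
theorem Monoid.CoprodI.coe_mulEquivISupOfInjective_of {ι : Type*} {M : ι → Subgroup Λ}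
    (h : Injective (CoprodI.lift fun i => (M i).subtype)) {i : ι} (y : M i) :
    (mulEquivISupOfInjective M h (of y) : Λ) = y := by
  simp [mulEquivISupOfInjective, MulEquiv.subgroupCongr_apply, MonoidHom.ofInjective_apply]

theorem Subgroup.commutator_top_subgroupOf_le_ker {G A : Type*} [Group G] [Group A]
    {K : Subgroup G} [K.Normal] (ψ : K →* A)
    (hψ : ∀ g : G, ψ.comp (MulAut.conjNormal g).toMonoidHom = ψ) :
    ⁅K, (⊤ : Subgroup G)⁆.subgroupOf K ≤ ψ.ker := by
  suffices ⁅K, (⊤ : Subgroup G)⁆ ≤ ψ.ker.map K.subtype from fun x hx =>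
    (mem_map_iff_mem K.subtype_injective).mp (this (mem_subgroupOf.mp hx))
  rw [commutator_le]
  intro k hk g _
  -- `⁅k, g⁆ = k * (g k⁻¹ g⁻¹)`, and `ψ (g k⁻¹ g⁻¹) = ψ k⁻¹`
  refine ⟨⟨k, hk⟩ * MulAut.conjNormal g ⟨k, hk⟩⁻¹, ?_, ?_⟩
  · have hconj := DFunLike.congr_fun (hψ g) ⟨k, hk⟩⁻¹
    simp only [MonoidHom.comp_apply, MulEquiv.coe_toMonoidHom] at hconj
    rw [SetLike.mem_coe, MonoidHom.mem_ker, map_mul, hconj, map_inv, mul_inv_cancel]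
  · simp [commutatorElement_def, mul_assoc]

namespace Subgroup

variable {L N : Subgroup Λ} (hNL : N ≤ L) [(N.subgroupOf L).Normal]

def coinvariantsMkOfLe : N →* (N.subgroupOf L).Coinvariants :=
  Coinvariants.mk.comp (subgroupOfEquivOfLe hNL).symm.toMonoidHom

theorem coinvariantsMkOfLe_surjective : Surjective (coinvariantsMkOfLe hNL) :=
  Coinvariants.mk_surjective.comp (subgroupOfEquivOfLe hNL).symm.surjective

theorem coinvariantsMkOfLe_of_eq_conj {l : Λ} (hl : l ∈ L) {x n : N} (hx : (x : Λ) = l * n * l⁻¹) :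
    coinvariantsMkOfLe hNL x = coinvariantsMkOfLe hNL n := by
  simp only [coinvariantsMkOfLe, MonoidHom.comp_apply, MulEquiv.coe_toMonoidHom]
  rw [← Coinvariants.mk_conjNormal ⟨l, hl⟩ ((subgroupOfEquivOfLe hNL).symm n)]
  congr 1
  ext
  simp [hx]

end Subgroup

namespace CohenLyndon

variable {L N : Subgroup Λ} (hNL : N ≤ L) [(N.subgroupOf L).Normal] {T : Set Λ}
  (hsup : (⨆ t : T, N.map (MulAut.conj t.1).toMonoidHom) = normalClosure (N : Set Λ))
  (hinj : Injective (CoprodI.lift fun t : T => (N.map (MulAut.conj t.1).toMonoidHom).subtype))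

noncomputable def freeProductEquiv :
    CoprodI (fun t : T => N.map (MulAut.conj t.1).toMonoidHom) ≃* normalClosure (N : Set Λ) :=
  (CoprodI.mulEquivISupOfInjective (fun t : T => N.map (MulAut.conj t.1).toMonoidHom) hinj).trans
    (MulEquiv.subgroupCongr hsup)

noncomputable def coinvariantsMap : normalClosure (N : Set Λ) →* (N.subgroupOf L).Coinvariants :=
  (CoprodI.lift fun t : T => (coinvariantsMkOfLe hNL).comp
    (N.equivMapOfInjective _ (MulAut.conj t.1).injective).symm.toMonoidHom).comp
      (freeProductEquiv hsup hinj).symm.toMonoidHom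

theorem coinvariantsMap_of_eq_conj {t : Λ} (ht : t ∈ T) (x : normalClosure (N : Set Λ)) {n : N}
    (hx : (x : Λ) = t * n * t⁻¹) :
    coinvariantsMap hNL hsup hinj x = coinvariantsMkOfLe hNL n := by
  have hy : (x : Λ) ∈ N.map (MulAut.conj t).toMonoidHom := hx ▸ ⟨n, n.2, rfl⟩
  have hxof : freeProductEquiv hsup hinj (CoprodI.of (i := ⟨t, ht⟩) ⟨x, hy⟩) = x :=
    Subtype.ext (CoprodI.coe_mulEquivISupOfInjective_of hinj (i := ⟨t, ht⟩) ⟨x, hy⟩)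
  rw [← hxof]
  simp only [coinvariantsMap, MonoidHom.comp_apply, MulEquiv.coe_toMonoidHom,
    MulEquiv.symm_apply_apply, CoprodI.lift_of]
  congr 1
  rw [MulEquiv.symm_apply_eq]
  exact Subtype.ext hx

theorem coinvariantsMap_of_eq_conj_conj
    (hT : ∀ g : Λ, ∃ t ∈ T, t⁻¹ * g ∈ normalClosure (N : Set Λ) ⊔ L) (g t : Λ)
    (x : normalClosure (N : Set Λ)) {n : N} (hx : (x : Λ) = g * (t * n * t⁻¹) * g⁻¹) :
    coinvariantsMap hNL hsup hinj x = coinvariantsMkOfLe hNL n := by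
  obtain ⟨t', ht', hgt⟩ := hT (g * t)
  rw [← SetLike.mem_coe, normal_mul, Set.mem_mul] at hgt
  obtain ⟨u, hu, l, hl, hul⟩ := hgt
  -- `g t = t' u l`, so `x = v (t' n' t'⁻¹) v⁻¹` with `v = t' u t'⁻¹ ∈ ⟨⟨N⟩⟩` and `n' = l n l⁻¹ ∈ N`
  let n' : N := ⟨l * n * l⁻¹, (normal_subgroupOf_iff hNL).mp inferInstance n l n.2 hl⟩
  let v : normalClosure (N : Set Λ) := ⟨t' * u * t'⁻¹, normalClosure_normal.conj_mem u hu t'⟩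
  let y : normalClosure (N : Set Λ) :=
    ⟨t' * n' * t'⁻¹, normalClosure_normal.conj_mem (n' : Λ) (subset_normalClosure n'.2) t'⟩
  have hxy : x = v * y * v⁻¹ := by
    have hg : g = t' * (u * l) * t⁻¹ := by rw [hul]; group
    ext
    simp only [hx, hg, v, y, n', coe_mul, coe_inv]
    group
  rw [hxy, map_mul, map_mul, map_inv, Coinvariants.mul_comm _ (coinvariantsMap hNL hsup hinj y),
    mul_inv_cancel_right, coinvariantsMap_of_eq_conj hNL hsup hinj ht' y rfl,
    coinvariantsMkOfLe_of_eq_conj hNL hl rfl]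

theorem coinvariantsMap_comp_conjNormal
    (hT : ∀ g : Λ, ∃ t ∈ T, t⁻¹ * g ∈ normalClosure (N : Set Λ) ⊔ L) (g : Λ) :
    (coinvariantsMap hNL hsup hinj).comp (MulAut.conjNormal g).toMonoidHom =
      coinvariantsMap hNL hsup hinj := by
  refine (MonoidHom.cancel_right (f := (freeProductEquiv hsup hinj).toMonoidHom)
    (freeProductEquiv hsup hinj).surjective).mp
    (CoprodI.ext_hom _ _ fun t => MonoidHom.ext fun y => ?_)
  obtain ⟨n, hn, hny⟩ := mem_map.mp y.2
  have hy : (freeProductEquiv hsup hinj (CoprodI.of y) : Λ) = t.1 * n * t.1⁻¹ :=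
    (CoprodI.coe_mulEquivISupOfInjective_of hinj y).trans hny.symm
  simp only [MonoidHom.comp_apply, MulEquiv.coe_toMonoidHom]
  rw [coinvariantsMap_of_eq_conj_conj hNL hsup hinj hT g t (n := ⟨n, hn⟩) _
      (by rw [MulAut.conjNormal_apply, hy]),
    coinvariantsMap_of_eq_conj hNL hsup hinj t.2 (n := ⟨n, hn⟩) _ hy]

theorem coinvariantsMap_surjective (hT : T.Nonempty) :
    Surjective (coinvariantsMap hNL hsup hinj) := by
  intro a
  obtain ⟨n, rfl⟩ := coinvariantsMkOfLe_surjective hNL a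
  obtain ⟨t, ht⟩ := hT
  exact ⟨⟨t * n * t⁻¹, normalClosure_normal.conj_mem _ (subset_normalClosure n.2) t⟩,
    coinvariantsMap_of_eq_conj hNL hsup hinj ht _ rfl⟩

end CohenLyndon

end

/-- If `(Λ, L, N)` has the Cohen–Lyndon property, then there is a
surjective homomorphism `⟨⟨N⟩⟩/[⟨⟨N⟩⟩, Λ] ↠ N/[L, N]`. -/
theorem cohen_lyndon_surjection {Λ : Type*} [Group Λ] (L N : Subgroup Λ)
    (hNL : N ≤ L) [hn : (N.subgroupOf L).Normal]
    (hCL : CohenLyndon L N) :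
    ∃ φ : (Subgroup.normalClosure (N : Set Λ) ⧸
            (⁅Subgroup.normalClosure (N : Set Λ), (⊤ : Subgroup Λ)⁆.subgroupOf
              (Subgroup.normalClosure (N : Set Λ)))) →*
          ((N.subgroupOf L) ⧸
            (⁅(⊤ : Subgroup L), N.subgroupOf L⁆.subgroupOf (N.subgroupOf L))),
      Function.Surjective φ := by
  obtain ⟨T, hT, hsup, hinj⟩ := hCL
  have hT' : ∀ g : Λ, ∃ t ∈ T, t⁻¹ * g ∈ normalClosure (N : Set Λ) ⊔ L := fun g => (hT g).exists
  have hTne : T.Nonempty := (hT 1).exists.imp fun _ => And.left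
  let ψ := CohenLyndon.coinvariantsMap hNL hsup hinj
  have hψ := commutator_top_subgroupOf_le_ker ψ
    (CohenLyndon.coinvariantsMap_comp_conjNormal hNL hsup hinj hT')
  exact ⟨QuotientGroup.lift _ ψ hψ, QuotientGroup.lift_surjective_of_surjective _ ψ
    (CohenLyndon.coinvariantsMap_surjective hNL hsup hinj hTne) hψ⟩
end
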